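/- Let H0 and W be bounded self-adjoint operators on a complex Hilbert space ℋ with W ≥ 0, and set λ(t) := inf spec(H0 + tW) for t ≥ 0. Let E_F ∈ ℝ, δ > 0 and t₀ > 0 be such that λ(t₀) ≥ E_F, and let I ⊂ ℝ be a compact interval with max I ≤ E_F − δ. Let P be an orthogonal projection commuting with H0 such that ⟨H0 g, g⟩ ≤ (max I)·‖g‖² for every g in the range of P. Then P W P ≥ (δ / t₀)·P. -/

import Mathlib

/-!
Since `inf spec (H0 + t₀ W) ≥ E_F`, the operator inequality `E_F ≤ H0 + t₀ W` holds, while on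
`range P` the form of `H0` is at most `b ≤ E_F - δ`. Hence `t₀ ⟪W g, g⟫ ≥ δ ‖g‖²` for `g ∈ range P`,
and compressing `W - δ / t₀` by the projection `P` gives `P W P - (δ / t₀) P ≥ 0`.
-/

open ContinuousLinearMap

namespace ContinuousLinearMap

variable {E : Type*} [NormedAddCommGroup E] [InnerProductSpace ℂ E]

lemma re_inner_sub_algebraMap_apply_self (T : E →L[ℂ] E) (c : ℝ) (x : E) :
    (inner ℂ ((T - algebraMap ℝ (E →L[ℂ] E) c) x) x).re
      = (inner ℂ (T x) x).re - c * ‖x‖ ^ 2 := by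
  rw [Algebra.algebraMap_eq_smul_one, sub_apply, inner_sub_left, Complex.sub_re, smul_apply,
    one_apply_eq_self, RCLike.real_smul_eq_coe_smul (K := ℂ), inner_smul_left,
    inner_self_eq_norm_sq_to_K]
  simp [← Complex.ofReal_pow]

lemma re_inner_add_smul_apply_self (S T : E →L[ℂ] E) (t : ℝ) (x : E) :
    (inner ℂ ((S + t • T) x) x).re = (inner ℂ (S x) x).re + t * (inner ℂ (T x) x).re := by
  rw [add_apply, inner_add_left, Complex.add_re, smul_apply, RCLike.real_smul_eq_coe_smul (K := ℂ),
    inner_smul_left]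
  simp

variable [CompleteSpace E]

lemma _root_.IsStarProjection.isPositive_comp_comp_sub_smul {P T : E →L[ℂ] E}
    (hP : IsStarProjection P) (hT : IsSelfAdjoint T) {c : ℝ}
    (hc : ∀ g ∈ Set.range P, c * ‖g‖ ^ 2 ≤ (inner ℂ (T g) g).re) :
    (P ∘L T ∘L P - c • P).IsPositive := by
  have hcompress : P ∘L (T - algebraMap ℝ (E →L[ℂ] E) c) ∘L P = P ∘L T ∘L P - c • P := by
    simp only [← mul_def, Algebra.algebraMap_eq_smul_one]
    rw [sub_mul, mul_sub, smul_mul_assoc, one_mul, mul_smul_comm, hP.isIdempotentElem.eq]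
  have hsa : IsSelfAdjoint (T - algebraMap ℝ (E →L[ℂ] E) c) := hT.sub (.algebraMap _ (.all c))
  rw [← hcompress, isPositive_def']
  refine ⟨?_, fun x => ?_⟩
  · simpa [hP.isSelfAdjoint.adjoint_eq] using hsa.conj_adjoint P
  · have hPsymm : ∀ u v, inner ℂ (P u) v = inner ℂ u (P v) := hP.isSelfAdjoint.isSymmetric
    rw [reApplyInnerSelf, comp_apply, comp_apply, hPsymm,
      RCLike.re_to_complex, re_inner_sub_algebraMap_apply_self]
    linarith [hc (P x) ⟨x, rfl⟩]

lemma _root_.IsSelfAdjoint.mul_norm_sq_le_re_inner {A : E →L[ℂ] E} (hA : IsSelfAdjoint A) {c : ℝ}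
    (hc : c ≤ sInf (spectrum ℝ A)) (x : E) : c * ‖x‖ ^ 2 ≤ (inner ℂ (A x) x).re := by
  have hle : algebraMap ℝ (E →L[ℂ] E) c ≤ A := algebraMap_le_of_le_spectrum
    (fun y hy => hc.trans (csInf_le (spectrum.isCompact A).bddBelow hy)) hA
  have hpos := ((le_def _ _).mp hle).re_inner_nonneg_left x
  rw [RCLike.re_to_complex, re_inner_sub_algebraMap_apply_self] at hpos
  linarith

end ContinuousLinearMap

theorem uncertainty_principle_explicit_constant_general
    {𝓗 : Type*} [NormedAddCommGroup 𝓗] [InnerProductSpace ℂ 𝓗] [CompleteSpace 𝓗]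
    (H0 W P : 𝓗 →L[ℂ] 𝓗)
    (hH0 : IsSelfAdjoint H0) (hW : W.IsPositive)
    (hPidem : IsIdempotentElem P) (hPsa : IsSelfAdjoint P)
    (lam : ℝ → ℝ) (hlam : ∀ t : ℝ, lam t = sInf (spectrum ℝ (H0 + t • W)))
    (E_F δ t₀ : ℝ) (ht₀ : 0 < t₀) (hfull : E_F ≤ lam t₀)
    (b : ℝ) (hb : b ≤ E_F - δ)
    (hPb : ∀ g ∈ Set.range P, ((inner ℂ (H0 g) g : ℂ)).re ≤ b * ‖g‖ ^ 2) :
    (P ∘L W ∘L P - (δ / t₀) • P).IsPositive := by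
  have hA : IsSelfAdjoint (H0 + t₀ • W) := hH0.add ((IsSelfAdjoint.all t₀).smul hW.isSelfAdjoint)
  refine IsStarProjection.isPositive_comp_comp_sub_smul ⟨hPidem, hPsa⟩ hW.isSelfAdjoint
    fun g hg => ?_
  have hlower := hA.mul_norm_sq_le_re_inner (hlam t₀ ▸ hfull) g
  rw [re_inner_add_smul_apply_self] at hlower
  rw [div_mul_eq_mul_div, div_le_iff₀ ht₀]
  linarith [hPb g hg, mul_le_mul_of_nonneg_right hb (sq_nonneg ‖g‖)]

/-- Explicit-constant uncertainty principle near a fluctuation boundary.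
If `λ(t₀) = inf spec(H0 + t₀ W) ≥ E_F` for some `t₀ > 0`, `I = [a, b]` is a compact
interval with `b ≤ E_F − δ`, and `P` is an orthogonal projection commuting with `H0`
with `⟨H0 g, g⟩ ≤ b ‖g‖²` on its range, then `P W P ≥ (δ / t₀) P`. -/
theorem uncertainty_principle_explicit_constant
    {𝓗 : Type*} [NormedAddCommGroup 𝓗] [InnerProductSpace ℂ 𝓗] [CompleteSpace 𝓗]
    (H0 W P : 𝓗 →L[ℂ] 𝓗)
    (hH0 : IsSelfAdjoint H0) (hW : W.IsPositive)
    (hPidem : IsIdempotentElem P) (hPsa : IsSelfAdjoint P)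
    (hcomm : P * H0 = H0 * P)
    (lam : ℝ → ℝ) (hlam : ∀ t : ℝ, lam t = sInf (spectrum ℝ (H0 + t • W)))
    (E_F δ t₀ : ℝ) (hδ : 0 < δ) (ht₀ : 0 < t₀) (hfull : E_F ≤ lam t₀)
    (a b : ℝ) (hab : a ≤ b) (hb : b ≤ E_F - δ)
    (hPb : ∀ g ∈ Set.range P, ((inner ℂ (H0 g) g : ℂ)).re ≤ b * ‖g‖ ^ 2) :
    (P ∘L W ∘L P - (δ / t₀) • P).IsPositive :=
  uncertainty_principle_explicit_constant_general H0 W P hH0 hW hPidem hPsa lam hlam E_F δ t₀ ht₀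
    hfull b hb hPb
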